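/- arXiv:1310.7344 — 5 statements merged into one kernel-verified Lean document; each statement's English description precedes it below -/
import Mathlib

section
/- If k, l, n : (0,∞) → ℝ satisfy k(x+y) = l(x) + n(y) for all x, y > 0, and k is nonconstant, then there exist a uniquely determined additive function a : ℝ → ℝ and real constants b, c such that k(x) = a(x) + b + c, l(x) = a(x) + b, and n(x) = a(x) + c for all x > 0. -/
/-!
Comparing the two ways of bracketing `k (x + y + z)` shows that `l (x + y) - l x = n (y + z) - n z`
depends on `y` alone; this increment `D` is additive on the cone, and `l`, `n`, `k` differ from it by
constants. An additive map on the cone extends to the whole line by `x ↦ D (x + t) - D t` for any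
`t > 0` with `x + t > 0`. For uniqueness, two admissible `a` differ on the cone by a constant, since
`l - a` is constant there; an additive map that is constant on the cone vanishes.
-/

section ConeExtension

lemma sub_eq_sub_of_add_on_pos {K G : Type*} [AddCommGroup K] [LT K] [AddCommGroup G] {g : K → G}
    (hg : ∀ x > 0, ∀ y > 0, g (x + y) = g x + g y)
    {x s t : K} (hs : 0 < s) (ht : 0 < t) (hxs : 0 < x + s) (hxt : 0 < x + t) :
    g (x + s) - g s = g (x + t) - g t := by
  have h := hg _ hxs _ ht
  rw [show x + s + t = x + t + s by abel, hg _ hxt _ hs] at h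
  rw [sub_eq_sub_iff_add_eq_add, ← h]

variable {K G : Type*} [CommRing K] [LinearOrder K] [IsStrictOrderedRing K] [AddCommGroup G]

lemma pos_add_abs_add_one (x : K) : 0 < x + (|x| + 1) := by
  linarith [neg_abs_le x]

def coneExtension (g : K → G) (x : K) : G :=
  g (x + (|x| + 1)) - g (|x| + 1)

variable {g : K → G} (hg : ∀ x > 0, ∀ y > 0, g (x + y) = g x + g y)
include hg

lemma coneExtension_eq {x t : K} (ht : 0 < t) (hxt : 0 < x + t) :
    coneExtension g x = g (x + t) - g t :=
  sub_eq_sub_of_add_on_pos hg (by positivity) ht (pos_add_abs_add_one x) hxt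

lemma coneExtension_of_pos {x : K} (hx : 0 < x) : coneExtension g x = g x := by
  rw [coneExtension_eq hg one_pos (by linarith), hg x hx 1 one_pos, add_sub_cancel_right]

lemma coneExtension_add (x y : K) :
    coneExtension g (x + y) = coneExtension g x + coneExtension g y := by
  set t := |x| + |y| + 1
  have ht : 0 < t := by positivity
  have hxt : 0 < x + t := by linarith [neg_abs_le x, abs_nonneg y]
  have hyt : 0 < y + t := by linarith [neg_abs_le y, abs_nonneg x]
  rw [coneExtension_eq hg (add_pos ht ht) (by linarith), coneExtension_eq hg ht hxt,
    coneExtension_eq hg ht hyt, show x + y + (t + t) = (x + t) + (y + t) by abel,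
    hg _ hxt _ hyt, hg t ht t ht]
  abel

def coneExtensionHom : K →+ G :=
  AddMonoidHom.mk' (coneExtension g) (coneExtension_add hg)

omit hg in
lemma AddMonoidHom.ext_of_eq_on_pos {f f' : K →+ G} (h : ∀ x > 0, f x = f' x) : f = f' := by
  ext x
  have hx := pos_add_abs_add_one x
  rw [← add_sub_cancel_right x (|x| + 1), map_sub, map_sub, h _ hx, h _ (by positivity)]

omit hg in
lemma AddMonoidHom.ext_of_sub_const_on_pos {f f' : K →+ G} {d : G}
    (h : ∀ x > 0, f x - f' x = d) : f = f' := by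
  have hdd := h (1 + 1) (by positivity)
  rw [map_add, map_add, add_sub_add_comm, h 1 one_pos] at hdd
  have hd : d = 0 := add_eq_left.mp hdd
  exact AddMonoidHom.ext_of_eq_on_pos fun x hx => sub_eq_zero.mp (hd ▸ h x hx)

end ConeExtension

section Pexider

variable {K G : Type*} [Field K] [LinearOrder K] [IsStrictOrderedRing K] [AddCommGroup G]
variable {k l n : K → G} (heq : ∀ x > 0, ∀ y > 0, k (x + y) = l x + n y)
include heq

def pexiderIncrement (l : K → G) (y : K) : G :=
  l (1 + y) - l 1

lemma pexider_sub_eq_sub {x y z : K} (hx : 0 < x) (hy : 0 < y) (hz : 0 < z) :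
    l (x + y) - l x = n (y + z) - n z := by
  have h := heq _ (add_pos hx hy) _ hz
  rw [add_assoc, heq _ hx _ (add_pos hy hz)] at h
  rw [sub_eq_sub_iff_add_eq_add, ← h]
  abel

lemma pexider_left_add {x y : K} (hx : 0 < x) (hy : 0 < y) :
    l (x + y) = l x + pexiderIncrement l y := by
  rw [pexiderIncrement, pexider_sub_eq_sub heq one_pos hy one_pos,
    ← pexider_sub_eq_sub heq hx hy one_pos]
  abel

lemma pexider_right_add {y z : K} (hy : 0 < y) (hz : 0 < z) :
    n (z + y) = n z + pexiderIncrement l y := by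
  rw [pexiderIncrement, pexider_sub_eq_sub heq one_pos hy hz, add_comm z]
  abel

lemma pexiderIncrement_add {y z : K} (hy : 0 < y) (hz : 0 < z) :
    pexiderIncrement l (y + z) = pexiderIncrement l y + pexiderIncrement l z := by
  have h := pexider_left_add heq (add_pos one_pos hy) hz
  rw [add_assoc, pexider_left_add heq one_pos (add_pos hy hz),
    pexider_left_add heq one_pos hy, add_assoc] at h
  exact add_left_cancel h

omit heq in
lemma eq_add_sub_of_add_eq {f D : K → G} (hf : ∀ x > 0, ∀ y > 0, f (x + y) = f x + D y)
    {x : K} (hx : 0 < x) : f x = D x + (f 1 - D 1) := by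
  have h := hf x hx 1 one_pos
  rw [add_comm x, hf 1 one_pos x hx] at h
  rw [add_sub, eq_sub_iff_add_eq, ← h, add_comm]

lemma pexider_left_eq {x : K} (hx : 0 < x) :
    l x = pexiderIncrement l x + (l 1 - pexiderIncrement l 1) :=
  eq_add_sub_of_add_eq (fun _ hx _ hy => pexider_left_add heq hx hy) hx

lemma pexider_right_eq {x : K} (hx : 0 < x) :
    n x = pexiderIncrement l x + (n 1 - pexiderIncrement l 1) :=
  eq_add_sub_of_add_eq (fun _ hz _ hy => pexider_right_add heq hy hz) hx

lemma pexider_sum_eq {x : K} (hx : 0 < x) :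
    k x = pexiderIncrement l x + (l 1 - pexiderIncrement l 1)
      + (n 1 - pexiderIncrement l 1) := by
  have hx2 : 0 < x / 2 := half_pos hx
  have hD := pexiderIncrement_add heq hx2 hx2
  rw [add_halves] at hD
  rw [← add_halves x, heq _ hx2 _ hx2, pexider_left_eq heq hx2, pexider_right_eq heq hx2,
    add_halves, hD]
  abel

end Pexider

theorem pexider_on_cone_general (k l n : ℝ → ℝ)
    (heq : ∀ x > (0:ℝ), ∀ y > (0:ℝ), k (x + y) = l x + n y) :
    ∃! a : ℝ → ℝ, (∀ x y : ℝ, a (x + y) = a x + a y) ∧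
      ∃ b c : ℝ, ∀ x > (0:ℝ), k x = a x + b + c ∧ l x = a x + b ∧ n x = a x + c := by
  set D := pexiderIncrement l
  have hD : ∀ x > (0:ℝ), ∀ y > 0, D (x + y) = D x + D y :=
    fun _ hx _ hy => pexiderIncrement_add heq hx hy
  set a := coneExtensionHom hD
  have ha : ∀ x > (0:ℝ), a x = D x := fun _ hx => coneExtension_of_pos hD hx
  refine ⟨a, ⟨map_add a, l 1 - D 1, n 1 - D 1, fun x hx => ?_⟩, ?_⟩
  · rw [ha x hx]
    exact ⟨pexider_sum_eq heq hx, pexider_left_eq heq hx, pexider_right_eq heq hx⟩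
  · rintro a' ⟨ha', b', c', h'⟩
    have hsub : ∀ x > (0:ℝ), AddMonoidHom.mk' a' ha' x - a x = l 1 - D 1 - b' := fun x hx => by
      simp only [AddMonoidHom.mk'_apply, ha x hx]
      linarith [(h' x hx).2.1, pexider_left_eq heq hx]
    exact congrArg DFunLike.coe (AddMonoidHom.ext_of_sub_const_on_pos hsub)

/-- Pexider equation on the cone (0,∞): if `k` is nonconstant there, the solutions
extend uniquely via an additive function on ℝ and constants `b`, `c`. -/
theorem pexider_on_cone (k l n : ℝ → ℝ)
    (heq : ∀ x > (0:ℝ), ∀ y > (0:ℝ), k (x + y) = l x + n y)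
    (hk : ∃ x > (0:ℝ), ∃ y > (0:ℝ), k x ≠ k y) :
    ∃! a : ℝ → ℝ, (∀ x y : ℝ, a (x + y) = a x + a y) ∧
      ∃ b c : ℝ, ∀ x > (0:ℝ), k x = a x + b + c ∧ l x = a x + b ∧ n x = a x + c :=
  pexider_on_cone_general k l n heq
end

section
/- If a : (0,∞) → ℝ satisfies a(x+y) = a(x) + a(y) for all x, y > 0, then there exists a unique additive function ã : ℝ → ℝ such that ã(x) = a(x) for all x > 0. -/
/-! Every `x` can be shifted into the positive cone, `x + t > 0` with `t > 0`, and additivity on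
the cone makes `a (x + t) - a t` independent of the shift: comparing both with `a (x + s + t)`
gives the same value for the shifts `s` and `t`. This difference is the extension; it is
additive by choosing a common shift for `x`, `y` and `x + y`, and forced on any additive
extension `g` since `g x = g (x + t) - g t`. -/

section

variable {G M : Type*} [AddCommGroup G] [LinearOrder G] [AddCommGroup M]

theorem exists_pos_add_pos [IsOrderedAddMonoid G] [NoMaxOrder G] (x : G) :
    ∃ t > 0, 0 < x + t := by
  obtain ⟨t, ht⟩ := exists_gt (max 0 (-x))
  exact ⟨t, (le_max_left _ _).trans_lt ht,
    neg_lt_iff_pos_add'.mp ((le_max_right _ _).trans_lt ht)⟩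

noncomputable def posExtension [IsOrderedAddMonoid G] [NoMaxOrder G] (a : G → M) (x : G) : M :=
  a (x + (exists_pos_add_pos x).choose) - a (exists_pos_add_pos x).choose

variable {a : G → M} (hadd : ∀ x > (0 : G), ∀ y > (0 : G), a (x + y) = a x + a y)
include hadd

theorem sub_shift_eq_sub_shift {x s t : G} (hs : 0 < s) (ht : 0 < t)
    (hxs : 0 < x + s) (hxt : 0 < x + t) : a (x + s) - a s = a (x + t) - a t := by
  have h : a (x + s) + a t = a (x + t) + a s := by
    rw [← hadd _ hxs _ ht, ← hadd _ hxt _ hs, add_right_comm]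
  rw [sub_eq_sub_iff_add_eq_add, h]

variable [IsOrderedAddMonoid G] [NoMaxOrder G]

theorem posExtension_eq {x t : G} (ht : 0 < t) (hxt : 0 < x + t) :
    posExtension a x = a (x + t) - a t :=
  have hspec := (exists_pos_add_pos x).choose_spec
  sub_shift_eq_sub_shift hadd hspec.1 ht hspec.2 hxt

theorem posExtension_of_pos {x : G} (hx : 0 < x) : posExtension a x = a x := by
  obtain ⟨t, ht, -⟩ := exists_pos_add_pos x
  rw [posExtension_eq hadd ht (add_pos hx ht), hadd _ hx _ ht, add_sub_cancel_right]

theorem posExtension_add (x y : G) :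
    posExtension a (x + y) = posExtension a x + posExtension a y := by
  obtain ⟨s, hs, hxs⟩ := exists_pos_add_pos x
  obtain ⟨t, ht, hyt⟩ := exists_pos_add_pos y
  have hxst : 0 < x + (s + t) := by rw [← add_assoc]; exact add_pos hxs ht
  have hyst : 0 < y + (s + t) := by rw [add_left_comm]; exact add_pos hs hyt
  have hsum : x + y + ((s + t) + (s + t)) = (x + (s + t)) + (y + (s + t)) := by abel
  have hst : 0 < s + t := add_pos hs ht
  rw [posExtension_eq hadd (add_pos hst hst) (hsum ▸ add_pos hxst hyst), hsum,
    hadd _ hxst _ hyst, hadd _ hst _ hst, posExtension_eq hadd hst hxst,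
    posExtension_eq hadd hst hyst]
  abel

theorem eq_posExtension_of_add {g : G → M} (hg : ∀ x y, g (x + y) = g x + g y)
    (hga : ∀ x > 0, g x = a x) (x : G) : g x = posExtension a x := by
  obtain ⟨t, ht, hxt⟩ := exists_pos_add_pos x
  rw [posExtension_eq hadd ht hxt, ← hga _ hxt, ← hga _ ht, hg, add_sub_cancel_right]

end

/-- A function additive on the cone (0,∞) extends uniquely to an additive function on ℝ. -/
theorem additive_extension (a : ℝ → ℝ)
    (hadd : ∀ x > (0:ℝ), ∀ y > (0:ℝ), a (x + y) = a x + a y) :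
    ∃! aTilde : ℝ → ℝ, (∀ x y : ℝ, aTilde (x + y) = aTilde x + aTilde y) ∧
      ∀ x > (0:ℝ), aTilde x = a x :=
  ⟨posExtension a, ⟨posExtension_add hadd, fun _ => posExtension_of_pos hadd⟩,
    fun _ ⟨hg, hga⟩ => funext (eq_posExtension_of_add hadd hg hga)⟩
end

section
/- Let a : (0,∞) → ℝ satisfy a(x+y) = a(x) + a(y) for all x, y > 0. If the restriction of a to some set A ⊆ (0,∞) of positive Lebesgue measure is Lebesgue measurable, then there exists λ ∈ ℝ such that a(x) = λ·x for all x > 0. -/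
/-!
Extending `a` by `x = s - t ↦ a s - a t` gives an additive map `f : ℝ → ℝ` agreeing with `a` on
`(0, ∞)`. On some `B ⊆ A` of positive measure `f` is bounded, hence bounded on `B - B`, which by
Steinhaus' theorem is a neighbourhood of `0`; an additive map bounded near `0` is continuous, and
a continuous additive map on `ℝ` is `x ↦ f 1 * x`.
-/

open MeasureTheory Metric Set

section ExtendAdditive

variable {G : Type*} [AddCommGroup G] {a : ℝ → G}

lemma sub_eq_sub_of_add_pos (hadd : ∀ x > (0:ℝ), ∀ y > (0:ℝ), a (x + y) = a x + a y)
    {s t s' t' : ℝ} (hs : 0 < s) (ht : 0 < t) (hs' : 0 < s') (ht' : 0 < t')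
    (h : s - t = s' - t') : a s - a t = a s' - a t' := by
  rw [sub_eq_sub_iff_add_eq_add, ← hadd s hs t' ht', ← hadd s' hs' t ht]
  congr 1
  linarith

/-- `x = s - t` with `s = |x| + x + 1` and `t = |x| + 1` both positive. -/
def extendOfAddPos (a : ℝ → G) (hadd : ∀ x > (0:ℝ), ∀ y > (0:ℝ), a (x + y) = a x + a y) :
    ℝ →+ G where
  toFun x := a (|x| + x + 1) - a (|x| + 1)
  map_zero' := by simp
  map_add' x y := by
    have pos (z : ℝ) : 0 < |z| + z + 1 := by linarith [neg_abs_le z]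
    rw [sub_add_sub_comm, ← hadd _ (pos x) _ (pos y), ← hadd _ (by positivity) _ (by positivity)]
    refine sub_eq_sub_of_add_pos hadd (pos _) (by positivity) (add_pos (pos x) (pos y))
      (by positivity) ?_
    ring

lemma extendOfAddPos_apply_of_pos
    (hadd : ∀ x > (0:ℝ), ∀ y > (0:ℝ), a (x + y) = a x + a y) {x : ℝ} (hx : 0 < x) :
    extendOfAddPos a hadd x = a x := by
  change a (|x| + x + 1) - a (|x| + 1) = a x
  rw [show |x| + x + 1 = x + (|x| + 1) by ring, hadd x hx _ (by positivity), add_sub_cancel_right]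

end ExtendAdditive

lemma AddMonoidHom.continuous_of_measurable_domRestrict {G H : Type*}
    [NormedAddCommGroup G] [MeasurableSpace G] [BorelSpace G] [LocallyCompactSpace G]
    [NormedAddCommGroup H] [NormedSpace ℝ H] [MeasurableSpace H] [OpensMeasurableSpace H]
    (μ : Measure G) [μ.IsAddHaarMeasure] [μ.InnerRegular] (f : G →+ H) {A : Set G}
    (hA : MeasurableSet A) (hμA : 0 < μ A) (hf : Measurable (A.domRestrict f)) : Continuous f := by
  obtain ⟨n, hn⟩ : ∃ n : ℕ, 0 < μ (A ∩ f ⁻¹' ball 0 n) := by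
    by_contra! h
    simp_rw [nonpos_iff_eq_zero, ← measure_iUnion_null_iff, ← inter_iUnion, ← preimage_iUnion,
      iUnion_ball_nat, preimage_univ, inter_univ] at h
    exact hμA.ne' h
  have hB : MeasurableSet (A ∩ f ⁻¹' ball 0 n) := by
    rw [← Subtype.image_preimage_coe]
    exact hA.subtype_image (hf measurableSet_ball)
  have hbdd : Bornology.IsBounded (f '' (A ∩ f ⁻¹' ball 0 n)) :=
    isBounded_ball.subset <| (image_mono inter_subset_right).trans (image_preimage_subset _ _)
  refine f.continuous_of_isBounded_nhds_zero
    (Measure.sub_mem_nhds_zero_of_addHaar_pos μ _ hB hn) ?_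
  rw [image_sub]
  exact hbdd.sub hbdd

/-- An additive function on (0,∞) measurable on a set of positive Lebesgue measure
is linear. -/
theorem additive_measurableOn_linear (a : ℝ → ℝ)
    (hadd : ∀ x > (0:ℝ), ∀ y > (0:ℝ), a (x + y) = a x + a y)
    (A : Set ℝ) (hA : A ⊆ Set.Ioi (0:ℝ)) (hmeasA : MeasurableSet A)
    (hpos : 0 < volume A) (hmeas : Measurable fun x : A => a (x : ℝ)) :
    ∃ l : ℝ, ∀ x > (0:ℝ), a x = l * x := by
  set f := extendOfAddPos a hadd
  have hfA : A.domRestrict f = fun x : A => a (x : ℝ) :=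
    funext fun x => extendOfAddPos_apply_of_pos hadd (hA x.2)
  have hf : Continuous f :=
    f.continuous_of_measurable_domRestrict volume hmeasA hpos (hfA ▸ hmeas)
  refine ⟨f 1, fun x hx => ?_⟩
  rw [← extendOfAddPos_apply_of_pos hadd hx, mul_comm]
  simpa using map_real_smul f hf x 1
end

section
/- Suppose a_s, b_s, c_s : (0,∞) → ℝ (for each s > 0) satisfy a_s(x) + b_s(y) = c_s(x+y) for all x, y > 0, and are given by a_s(x) = a(sx) − a(x), b_s(x) = b(sx) − b(x), c_s(x) = c(sx) − c(x) for functions a, b, c : (0,∞) → ℝ. If for each s > 0 there is an additive function A_s : ℝ → ℝ and reals α(s), β(s) with a_s(x) = A_s(x) + α(s), then α satisfies α(st) = α(s) + α(t) for all s, t > 0, i.e., α is logarithmic on (0,∞). -/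
/-!
The increments `a_s x = a (s x) - a x` satisfy the cocycle identity
`a_{st} x = a_t (s x) + a_s x`. Since an additive `A` has `A (2x) = 2 A x`, the constant part of
`a_s = A_s + α s` is recovered as `α s = 2 a_s x - a_s (2x)` at any point `x > 0`; taking `x = 1`
for `s t` and `s`, and `x = s` for `t`, the cocycle identity splits `α (s t)` into `α t + α s`.
-/

def mulIncrement {G M : Type*} [Mul G] [Sub M] (a : G → M) (s x : G) : M := a (s * x) - a x

theorem mulIncrement_mul {G M : Type*} [CommSemigroup G] [AddGroup M] (a : G → M) (s t x : G) :
    mulIncrement a (s * t) x = mulIncrement a t (s * x) + mulIncrement a s x := by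
  simp only [mulIncrement, mul_comm s t, mul_assoc, sub_add_sub_cancel]

theorem eq_add_sub_of_eq_additive_add {M N : Type*} [Add M] [AddCommGroup N] {f g : M → N}
    {κ : N} {x : M} (hf : ∀ y z, f (y + z) = f y + f z) (hx : g x = f x + κ)
    (hxx : g (x + x) = f (x + x) + κ) : κ = g x + g x - g (x + x) := by
  rw [hxx, hx, hf]
  abel

theorem increment_alpha_logarithmic_general (a : ℝ → ℝ) (A : ℝ → ℝ → ℝ) (α : ℝ → ℝ)
    (hA : ∀ s > (0:ℝ), ∀ x y : ℝ, A s (x + y) = A s x + A s y)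
    (ha : ∀ s > (0:ℝ), ∀ x > (0:ℝ), a (s * x) - a x = A s x + α s) :
    ∀ s > (0:ℝ), ∀ t > (0:ℝ), α (s * t) = α s + α t := by
  intro s hs t ht
  have hα : ∀ r > (0:ℝ), ∀ x > (0:ℝ),
      α r = mulIncrement a r x + mulIncrement a r x - mulIncrement a r (x + x) :=
    fun r hr x hx => eq_add_sub_of_eq_additive_add (g := mulIncrement a r) (hA r hr)
      (ha r hr x hx) (ha r hr (x + x) (by positivity))
  rw [hα (s * t) (mul_pos hs ht) 1 one_pos, hα s hs 1 one_pos, hα t ht s hs,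
    mulIncrement_mul, mulIncrement_mul, mul_add, mul_one]
  abel

/-- If the multiplicative increments `a_s(x) = a(sx) - a(x)` solve the Pexider
equation and each decomposes as `A_s + α(s)` with `A_s` additive, then `α` is
logarithmic on (0,∞). -/
theorem increment_alpha_logarithmic (a b c : ℝ → ℝ) (A : ℝ → ℝ → ℝ) (α β : ℝ → ℝ)
    (hpex : ∀ s > (0:ℝ), ∀ x > (0:ℝ), ∀ y > (0:ℝ),
      (a (s * x) - a x) + (b (s * y) - b y) = c (s * (x + y)) - c (x + y))
    (hA : ∀ s > (0:ℝ), ∀ x y : ℝ, A s (x + y) = A s x + A s y)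
    (ha : ∀ s > (0:ℝ), ∀ x > (0:ℝ), a (s * x) - a x = A s x + α s)
    (hb : ∀ s > (0:ℝ), ∀ x > (0:ℝ), b (s * x) - b x = A s x + β s) :
    ∀ s > (0:ℝ), ∀ t > (0:ℝ), α (s * t) = α s + α t :=
  increment_alpha_logarithmic_general a A α hA ha
end

section
/- Let f, g, p, q : (0,∞) → (0,∞) be positive functions satisfying f(x)·g(y) = p(x+y)·q(x/y) for all x, y > 0, and assume all four are continuous. Then there exist constants λ ∈ ℝ, C₁, C₂ ∈ ℝ, and K₁, K₂, K₃ > 0 such that f(x) = K₁ e^{λx} x^{C₁}, g(x) = K₂ e^{λx} x^{C₂}, and p(x) = K₃ e^{λx} x^{C₁+C₂} for all x > 0. -/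
/-!
Taking logarithms turns the equation into `F x + G y = P (x + y) + Q (x / y)`.
Swapping `x` and `y` and subtracting shows that `F - G` has differences depending only on
`x / y`, so it is logarithmic. Setting `x = y` expresses `P` through `S = F + G`, and then the
Jensen defect `S x + S y - 2 S ((x + y) / 2)` depends only on `x / y`. Hence every
`x ↦ S (r x) - S x` satisfies Jensen's equation and is affine, `S (r x) = S x + A r x + B r`;
the cocycle identities for `A` and `B` force `A r = a (r - 1)` and `B r = C log r`.
-/

open Real Set

theorem eq_add_mul_sub_one_of_jensen {g : ℝ → ℝ} (hc : ContinuousOn g (Ioi 0))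
    (hJ : ∀ x > 0, ∀ y > 0, g x + g y = 2 * g ((x + y) / 2)) :
    ∀ x > 0, g x = g 1 + (g 2 - g 1) * (x - 1) := by
  have hsub : ∀ a > 0, ∀ b > 0, ∀ c > 0, ∀ d > 0,
      a - b = c - d → g a - g b = g c - g d := by
    intro a ha b hb c hc d hd h
    have h₁ := hJ a ha d hd
    have h₂ := hJ c hc b hb
    rw [show a + d = c + b by linarith] at h₁
    linarith
  -- `g a - g b` depends only on `a - b`, which defines an additive function on all of `ℝ`.
  let W : ℝ → ℝ := fun t => g (t + (|t| + 1)) - g (|t| + 1)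
  have hM : ∀ t : ℝ, 0 < |t| + 1 := fun t => by positivity
  have hM' : ∀ t : ℝ, 0 < t + (|t| + 1) := fun t => by linarith [neg_abs_le t]
  have hW : ∀ t, ∀ a > 0, ∀ b > 0, a - b = t → W t = g a - g b := fun t a ha b hb h =>
    hsub _ (hM' t) _ (hM t) _ ha _ hb (by rw [h]; ring)
  let φ : ℝ →+ ℝ := AddMonoidHom.mk' W fun s t => by
    rw [hW (s + t) _ (add_pos (hM' s) (hM' t)) _ (add_pos (hM s) (hM t)) (by ring),
      hW s _ (add_pos (hM' s) (hM' t)) _ (add_pos (hM' t) (hM s)) (by ring),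
      hW t _ (add_pos (hM' t) (hM s)) _ (add_pos (hM s) (hM t)) (by ring)]
    ring
  have hφ : Continuous φ :=
    (hc.comp_continuous (by fun_prop) hM').sub (hc.comp_continuous (by fun_prop) hM)
  intro x hx
  have h := map_real_smul φ hφ (x - 1) 1
  simp only [smul_eq_mul, mul_one] at h
  change W (x - 1) = (x - 1) * W 1 at h
  rw [hW (x - 1) x hx 1 one_pos rfl, hW 1 2 two_pos 1 one_pos (by norm_num)] at h
  linarith

theorem eq_mul_log_of_map_mul {h : ℝ → ℝ} (hc : ContinuousOn h (Ioi 0))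
    (hmul : ∀ x > 0, ∀ y > 0, h (x * y) = h x + h y) :
    ∀ x > 0, h x = h (exp 1) * log x := by
  let φ : ℝ →+ ℝ := AddMonoidHom.mk' (fun u => h (exp u)) fun u v => by
    simp only [exp_add]
    exact hmul _ (exp_pos u) _ (exp_pos v)
  have hφ : Continuous φ := hc.comp_continuous continuous_exp exp_pos
  intro x hx
  have h := map_real_smul φ hφ (log x) 1
  simpa [φ, exp_log hx, mul_comm] using h

theorem exists_eq_mul_add_mul_log_of_dilation {S A B : ℝ → ℝ} (hS : ContinuousOn S (Ioi 0))
    (h : ∀ r > 0, ∀ x > 0, S (r * x) = S x + A r * x + B r) :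
    ∃ a b C : ℝ, ∀ x > 0, S x = a * x + C * log x + b := by
  have hcocycle : ∀ r > 0, ∀ t > 0, A (r * t) = A t + A r * t ∧ B (r * t) = B t + B r := by
    intro r hr t ht
    -- Dilate `x = 1, 2` by `r * t` at once and by `t`, then `r`; compare.
    have hrt := mul_pos hr ht
    have e₁ := h (r * t) hrt 1 one_pos
    have e₂ := h (r * t) hrt 2 two_pos
    have e₃ := h r hr t ht
    have e₄ := h r hr (t * 2) (by positivity)
    have e₅ := h t ht 1 one_pos
    have e₆ := h t ht 2 two_pos
    rw [mul_one] at e₁ e₅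
    rw [mul_assoc] at e₂
    rw [e₆] at e₄
    constructor <;> linarith
  have hA : ∀ t > 0, A t = A 2 * (t - 1) := by
    intro t ht
    have h₁ := (hcocycle 2 two_pos t ht).1
    have h₂ := (hcocycle t ht 2 two_pos).1
    rw [mul_comm t] at h₂
    linarith
  have hBc : ContinuousOn B (Ioi 0) := by
    refine ContinuousOn.congr (f := fun r => 2 * (S r - S 1) - (S (r * 2) - S 2)) ?_ ?_
    · have hS2 : ContinuousOn (fun r => S (r * 2)) (Ioi 0) :=
        hS.comp (by fun_prop) fun r (hr : 0 < r) => show 0 < r * 2 by positivity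
      exact (continuousOn_const.mul (hS.sub continuousOn_const)).sub (hS2.sub continuousOn_const)
    · intro r hr
      have e₁ := h r hr 1 one_pos
      have e₂ := h r hr 2 two_pos
      rw [mul_one] at e₁
      simp only
      linarith
  have hB := eq_mul_log_of_map_mul hBc fun r hr t ht => by
    rw [(hcocycle r hr t ht).2, add_comm]
  refine ⟨A 2, S 1 - A 2, B (exp 1), fun x hx => ?_⟩
  have e := h x hx 1 one_pos
  rw [mul_one] at e
  rw [e, hA x hx, hB x hx]
  ring

theorem exists_eq_mul_add_mul_log_of_jensen_defect {S : ℝ → ℝ} (hS : ContinuousOn S (Ioi 0))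
    (hD : ∀ r > 0, ∀ x > 0, ∀ y > 0,
      S (r * x) + S (r * y) - 2 * S ((r * x + r * y) / 2) = S x + S y - 2 * S ((x + y) / 2)) :
    ∃ a b C : ℝ, ∀ x > 0, S x = a * x + C * log x + b := by
  refine exists_eq_mul_add_mul_log_of_dilation hS
    (A := fun r => S (r * 2) - S 2 - (S r - S 1))
    (B := fun r => 2 * (S r - S 1) - (S (r * 2) - S 2))
    fun r hr x hx => ?_
  have hdil : ContinuousOn (fun x => S (r * x)) (Ioi 0) :=
    hS.comp (by fun_prop) fun x (hx : 0 < x) => show 0 < r * x by positivity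
  have hJ := eq_add_mul_sub_one_of_jensen (g := fun x => S (r * x) - S x) (hdil.sub hS)
    (fun x hx y hy => by
      have e := hD r hr x hx y hy
      rw [show (r * x + r * y) / 2 = r * ((x + y) / 2) by ring] at e
      linarith) x hx
  simp only [mul_one] at hJ
  linarith

section OlkinBaker

variable {F G P Q : ℝ → ℝ}

theorem olkin_sub_eq_mul_log (hc : ContinuousOn (fun x => F x - G x) (Ioi 0))
    (heq : ∀ x > 0, ∀ y > 0, F x + G y = P (x + y) + Q (x / y)) :
    ∃ c d : ℝ, ∀ x > 0, F x - G x = c * log x + d := by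
  have hlog := eq_mul_log_of_map_mul (h := fun x => F x - G x - (F 1 - G 1))
    (hc.sub continuousOn_const) fun x hx y hy => by
      have hxy := mul_pos hx hy
      have e₁ := heq (x * y) hxy y hy
      have e₂ := heq y hy (x * y) hxy
      have e₃ := heq x hx 1 one_pos
      have e₄ := heq 1 one_pos x hx
      rw [mul_div_cancel_right₀ x hy.ne'] at e₁
      rw [div_mul_cancel_right₀ hy.ne', add_comm y] at e₂
      rw [div_one] at e₃
      rw [one_div, add_comm 1] at e₄
      linarith
  exact ⟨F (exp 1) - G (exp 1) - (F 1 - G 1), F 1 - G 1, fun x hx => by linarith [hlog x hx]⟩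

theorem olkin_P_eq_sum_half (heq : ∀ x > 0, ∀ y > 0, F x + G y = P (x + y) + Q (x / y))
    {s : ℝ} (hs : 0 < s) : P s = F (s / 2) + G (s / 2) - Q 1 := by
  have e := heq (s / 2) (by positivity) (s / 2) (by positivity)
  rw [add_halves, div_self (by positivity)] at e
  linarith

theorem olkin_jensen_defect (heq : ∀ x > 0, ∀ y > 0, F x + G y = P (x + y) + Q (x / y))
    {x y : ℝ} (hx : 0 < x) (hy : 0 < y) :
    (F x + G x) + (F y + G y) - 2 * (F ((x + y) / 2) + G ((x + y) / 2)) =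
      Q (x / y) + Q (y / x) - 2 * Q 1 := by
  have e₁ := heq x hx y hy
  have e₂ := heq y hy x hx
  rw [add_comm y] at e₂
  have e₃ := olkin_P_eq_sum_half heq (add_pos hx hy)
  linarith

theorem olkin_baker_additive (hF : ContinuousOn F (Ioi 0)) (hG : ContinuousOn G (Ioi 0))
    (heq : ∀ x > 0, ∀ y > 0, F x + G y = P (x + y) + Q (x / y)) :
    ∃ lam C₁ C₂ k₁ k₂ k₃ : ℝ, (∀ x > 0, F x = lam * x + C₁ * log x + k₁) ∧
      (∀ x > 0, G x = lam * x + C₂ * log x + k₂) ∧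
      ∀ x > 0, P x = lam * x + (C₁ + C₂) * log x + k₃ := by
  obtain ⟨c, d, hH⟩ := olkin_sub_eq_mul_log (hF.sub hG) heq
  obtain ⟨a, b, C, hS⟩ := exists_eq_mul_add_mul_log_of_jensen_defect
    (S := fun x => F x + G x) (hF.add hG)
    fun r hr x hx y hy => by
      simp only [olkin_jensen_defect heq (mul_pos hr hx) (mul_pos hr hy),
        olkin_jensen_defect heq hx hy, mul_div_mul_left _ _ hr.ne']
  refine ⟨a / 2, (C + c) / 2, (C - c) / 2, (b + d) / 2, (b - d) / 2, b - C * log 2 - Q 1,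
    fun x hx => ?_, fun x hx => ?_, fun x hx => ?_⟩
  · linear_combination (hS x hx + hH x hx) / 2
  · linear_combination (hS x hx - hH x hx) / 2
  · rw [olkin_P_eq_sum_half heq hx, hS _ (by positivity), log_div hx.ne' two_ne_zero]
    ring

end OlkinBaker

theorem exp_mul_add_mul_log_add {x : ℝ} (hx : 0 < x) (lam C k : ℝ) :
    exp (lam * x + C * log x + k) = exp k * exp (lam * x) * x ^ C := by
  rw [rpow_def_of_pos hx, exp_add, exp_add]
  ring_nf

theorem olkin_baker_multiplicative_general (f g p q : ℝ → ℝ)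
    (hf : ∀ x > (0:ℝ), 0 < f x) (hg : ∀ x > (0:ℝ), 0 < g x)
    (hp : ∀ x > (0:ℝ), 0 < p x) (hq : ∀ x > (0:ℝ), 0 < q x)
    (heq : ∀ x > (0:ℝ), ∀ y > (0:ℝ), f x * g y = p (x + y) * q (x / y))
    (hfc : ContinuousOn f (Set.Ioi 0)) (hgc : ContinuousOn g (Set.Ioi 0)) :
    ∃ lam C₁ C₂ : ℝ, ∃ K₁ > (0:ℝ), ∃ K₂ > (0:ℝ), ∃ K₃ > (0:ℝ),
      (∀ x > (0:ℝ), f x = K₁ * Real.exp (lam * x) * x ^ C₁) ∧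
      (∀ x > (0:ℝ), g x = K₂ * Real.exp (lam * x) * x ^ C₂) ∧
      ∀ x > (0:ℝ), p x = K₃ * Real.exp (lam * x) * x ^ (C₁ + C₂) := by
  have heqLog : ∀ x > 0, ∀ y > 0,
      log (f x) + log (g y) = log (p (x + y)) + log (q (x / y)) := fun x hx y hy => by
    rw [← log_mul (hf x hx).ne' (hg y hy).ne',
      ← log_mul (hp _ (add_pos hx hy)).ne' (hq _ (div_pos hx hy)).ne', heq x hx y hy]
  obtain ⟨lam, C₁, C₂, k₁, k₂, k₃, hF, hG, hP⟩ := olkin_baker_additive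
    (P := fun x => log (p x)) (Q := fun x => log (q x))
    (hfc.log fun x hx => (hf x hx).ne') (hgc.log fun x hx => (hg x hx).ne') heqLog
  refine ⟨lam, C₁, C₂, exp k₁, exp_pos _, exp k₂, exp_pos _, exp k₃, exp_pos _,
    fun x hx => ?_, fun x hx => ?_, fun x hx => ?_⟩
  · rw [← exp_log (hf x hx), hF x hx, exp_mul_add_mul_log_add hx]
  · rw [← exp_log (hg x hx), hG x hx, exp_mul_add_mul_log_add hx]
  · rw [← exp_log (hp x hx), hP x hx, exp_mul_add_mul_log_add hx]

/-- Baker's solution of Olkin's multiplicative functional equation for positive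
continuous functions. -/
theorem olkin_baker_multiplicative (f g p q : ℝ → ℝ)
    (hf : ∀ x > (0:ℝ), 0 < f x) (hg : ∀ x > (0:ℝ), 0 < g x)
    (hp : ∀ x > (0:ℝ), 0 < p x) (hq : ∀ x > (0:ℝ), 0 < q x)
    (heq : ∀ x > (0:ℝ), ∀ y > (0:ℝ), f x * g y = p (x + y) * q (x / y))
    (hfc : ContinuousOn f (Set.Ioi 0)) (hgc : ContinuousOn g (Set.Ioi 0))
    (hpc : ContinuousOn p (Set.Ioi 0)) (hqc : ContinuousOn q (Set.Ioi 0)) :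
    ∃ lam C₁ C₂ : ℝ, ∃ K₁ > (0:ℝ), ∃ K₂ > (0:ℝ), ∃ K₃ > (0:ℝ),
      (∀ x > (0:ℝ), f x = K₁ * Real.exp (lam * x) * x ^ C₁) ∧
      (∀ x > (0:ℝ), g x = K₂ * Real.exp (lam * x) * x ^ C₂) ∧
      ∀ x > (0:ℝ), p x = K₃ * Real.exp (lam * x) * x ^ (C₁ + C₂) :=
  olkin_baker_multiplicative_general f g p q hf hg hp hq heq hfc hgc
end
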